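/- Let f : ℝ^m → ℝ be continuous with |f(x)| ≤ A + B|x|, and for integer n > B define f_n(x) = inf_{y} [ f(y) + n|x - y| ]. Then f_n converges pointwise to f as n → ∞: for every x ∈ ℝ^m, lim_{n→∞} f_n(x) = f(x). -/
import Mathlib


theorem inf_convolution_tendsto
    (m : ℕ) (f : EuclideanSpace ℝ (Fin m) → ℝ) (hf : Continuous f)
    (A B : ℝ) (hA : 0 ≤ A) (hB : 0 ≤ B)
    (hgrowth : ∀ x, |f x| ≤ A + B * ‖x‖) :
    ∀ x : EuclideanSpace ℝ (Fin m),
      Filter.Tendsto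
        (fun n : ℕ => ⨅ y : EuclideanSpace ℝ (Fin m), (f y + (n : ℝ) * ‖x - y‖))
        Filter.atTop (nhds (f x)) := by
  intro x
  have hfx : |f x| ≤ A + B * ‖x‖ := hgrowth x
  have key : ∀ (n : ℕ) (y : EuclideanSpace ℝ (Fin m)), B ≤ (n : ℝ) →
      -(A + B * ‖x‖) + ((n : ℝ) - B) * ‖x - y‖ ≤ f y + (n : ℝ) * ‖x - y‖ := by
    intro n y hn
    have h1 : -(A + B * ‖y‖) ≤ f y := neg_le_of_abs_le (hgrowth y)
    have h2 : ‖y‖ ≤ ‖x‖ + ‖x - y‖ := by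
      have : y = x - (x - y) := by abel
      calc ‖y‖ = ‖x - (x - y)‖ := by rw [← this]
        _ ≤ ‖x‖ + ‖x - y‖ := norm_sub_le _ _
    nlinarith [norm_nonneg (x - y)]
  rw [Metric.tendsto_atTop]
  intro ε hε
  obtain ⟨δ, hδ, hδf⟩ := Metric.continuous_iff.mp hf x (ε / 2) (by positivity)
  obtain ⟨N, hN⟩ := exists_nat_ge (B + 2 * (A + B * ‖x‖) / δ) 
  refine ⟨N, fun n hn => ?_⟩
  have hnN : (N : ℝ) ≤ (n : ℝ) := Nat.cast_le.mpr hn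
  have hnB : B ≤ (n : ℝ) := by
    have : 0 ≤ 2 * (A + B * ‖x‖) / δ := by positivity
    linarith
  have hbdd : BddBelow (Set.range fun y : EuclideanSpace ℝ (Fin m) =>
      f y + (n : ℝ) * ‖x - y‖) := by
    refine ⟨-(A + B * ‖x‖), ?_⟩
    rintro _ ⟨y, rfl⟩
    have h := key n y hnB
    have h0 : 0 ≤ ((n : ℝ) - B) * ‖x - y‖ :=
      mul_nonneg (by linarith) (norm_nonneg _)
    show -(A + B * ‖x‖) ≤ f y + (n : ℝ) * ‖x - y‖
    linarith
  have hup : (⨅ y : EuclideanSpace ℝ (Fin m), f y + (n : ℝ) * ‖x - y‖) ≤ f x := by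
    have := ciInf_le hbdd x
    simpa using this
  have hlow : f x - ε / 2 ≤ ⨅ y : EuclideanSpace ℝ (Fin m), f y + (n : ℝ) * ‖x - y‖ := by
    refine le_ciInf fun y => ?_
    by_cases hy : dist y x < δ
    · have h1 : dist (f y) (f x) < ε / 2 := hδf y hy
      have h2 : |f y - f x| < ε / 2 := by rwa [Real.dist_eq] at h1
      have h3 : f x - ε / 2 ≤ f y := by
        have := abs_lt.mp h2
        linarith [this.1]
      have h4 : 0 ≤ (n : ℝ) * ‖x - y‖ := by positivity
      linarith
    · push_neg at hy
      have hxy : δ ≤ ‖x - y‖ := by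
        rw [dist_eq_norm, ← norm_neg] at hy
        simpa [neg_sub] using hy
      have h := key n y hnB
      have hdm : 2 * (A + B * ‖x‖) / δ * δ = 2 * (A + B * ‖x‖) :=
        div_mul_cancel₀ _ (ne_of_gt hδ)
      have h5 : 2 * (A + B * ‖x‖) ≤ ((n : ℝ) - B) * ‖x - y‖ := by
        have hnb : 2 * (A + B * ‖x‖) / δ ≤ (n : ℝ) - B := by linarith
        calc 2 * (A + B * ‖x‖) = 2 * (A + B * ‖x‖) / δ * δ := hdm.symm
          _ ≤ ((n : ℝ) - B) * ‖x - y‖ := by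
              apply mul_le_mul hnb hxy (le_of_lt hδ)
              linarith
      have h6 : f x ≤ A + B * ‖x‖ := le_of_abs_le hfx
      linarith
  rw [Real.dist_eq, abs_sub_lt_iff]
  constructor <;> linarith
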